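/- If E is a non-unital qubit channel (Bloch action n⃗ ↦ A n⃗ + b⃗ with b⃗ ≠ 0) and M is an isometry satisfying Tr_X[M ρ M†] = Tr_X[M E(ρ) M†] for all states ρ and X ∈ {A,B}, then Tr_X[M |b̂⟩⟨b̂| M†] = Tr_X[M |−b̂⟩⟨−b̂| M†], where |±b̂⟩ are the pure states with Bloch vectors ±b⃗/‖b⃗‖. -/

import Mathlib

open Matrix
open scoped ComplexOrder

noncomputable section

/-- Partial trace over the first (A) factor. -/
def ptA {dA dB : ℕ} (M : Matrix (Fin dA × Fin dB) (Fin dA × Fin dB) ℂ) :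
    Matrix (Fin dB) (Fin dB) ℂ :=
  fun i j => ∑ k, M (k, i) (k, j)

/-- Partial trace over the second (B) factor. -/
def ptB {dA dB : ℕ} (M : Matrix (Fin dA × Fin dB) (Fin dA × Fin dB) ℂ) :
    Matrix (Fin dA) (Fin dA) ℂ :=
  fun i j => ∑ k, M (i, k) (j, k)

def σx : Matrix (Fin 2) (Fin 2) ℂ := !![0, 1; 1, 0]
def σy : Matrix (Fin 2) (Fin 2) ℂ := !![0, -Complex.I; Complex.I, 0]
def σz : Matrix (Fin 2) (Fin 2) ℂ := !![1, 0; 0, -1]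

/-- `n⃗ · σ⃗` for a real Bloch vector `n⃗`. -/
def pv (n : Fin 3 → ℝ) : Matrix (Fin 2) (Fin 2) ℂ := n 0 • σx + n 1 • σy + n 2 • σz

/-- The Choi matrix of a linear map on `n × n` matrices. -/
def choi {n : ℕ} (E : Matrix (Fin n) (Fin n) ℂ →ₗ[ℂ] Matrix (Fin n) (Fin n) ℂ) :
    Matrix (Fin n × Fin n) (Fin n × Fin n) ℂ :=
  fun p q => (E (Matrix.single p.1 q.1 1)) p.2 q.2

/-- Completely positive and trace preserving. -/
def IsCPTP {n : ℕ} (E : Matrix (Fin n) (Fin n) ℂ →ₗ[ℂ] Matrix (Fin n) (Fin n) ℂ) : Prop :=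
  (choi E).PosSemidef ∧ ∀ ρ, (E ρ).trace = ρ.trace

lemma ptA_sub {dA dB : ℕ} (X Y : Matrix (Fin dA × Fin dB) (Fin dA × Fin dB) ℂ) :
    ptA (X - Y) = ptA X - ptA Y := by
  ext i j; simp [ptA, Finset.sum_sub_distrib]

lemma ptB_sub {dA dB : ℕ} (X Y : Matrix (Fin dA × Fin dB) (Fin dA × Fin dB) ℂ) :
    ptB (X - Y) = ptB X - ptB Y := by
  ext i j; simp [ptB, Finset.sum_sub_distrib]

lemma ptA_smul {dA dB : ℕ} (c : ℝ) (X : Matrix (Fin dA × Fin dB) (Fin dA × Fin dB) ℂ) :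
    ptA (c • X) = c • ptA X := by
  ext i j; simp [ptA, Finset.smul_sum]

lemma ptB_smul {dA dB : ℕ} (c : ℝ) (X : Matrix (Fin dA × Fin dB) (Fin dA × Fin dB) ℂ) :
    ptB (c • X) = c • ptB X := by
  ext i j; simp [ptB, Finset.smul_sum]

lemma pv_zero : pv 0 = 0 := by simp [pv]

lemma pv_neg (n : Fin 3 → ℝ) : pv (-n) = -pv n := by
  simp [pv, neg_smul]; abel

lemma pv_smul (c : ℝ) (n : Fin 3 → ℝ) : pv (c • n) = c • pv n := by
  simp only [pv, Pi.smul_apply, smul_eq_mul, smul_add, smul_smul]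

theorem stmt14 {dA dB : ℕ} (E : Matrix (Fin 2) (Fin 2) ℂ →ₗ[ℂ] Matrix (Fin 2) (Fin 2) ℂ)
    (hE : IsCPTP E)
    (A : Matrix (Fin 3) (Fin 3) ℝ) (b : Fin 3 → ℝ) (hb : b ≠ 0)
    (hBloch : ∀ n : Fin 3 → ℝ,
      E ((1 / 2 : ℝ) • ((1 : Matrix (Fin 2) (Fin 2) ℂ) + pv n)) =
        (1 / 2 : ℝ) • ((1 : Matrix (Fin 2) (Fin 2) ℂ) + pv (A *ᵥ n + b)))
    (M : Matrix (Fin dA × Fin dB) (Fin 2) ℂ) (hM : Mᴴ * M = 1)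
    (hmask : ∀ ρ : Matrix (Fin 2) (Fin 2) ℂ, ρ.PosSemidef → ρ.trace = 1 →
      ptA (M * ρ * Mᴴ) = ptA (M * E ρ * Mᴴ) ∧
      ptB (M * ρ * Mᴴ) = ptB (M * E ρ * Mᴴ)) :
    ptA (M * ((1 / 2 : ℝ) • ((1 : Matrix (Fin 2) (Fin 2) ℂ) +
        pv ((Real.sqrt (∑ i, b i ^ 2))⁻¹ • b))) * Mᴴ) =
      ptA (M * ((1 / 2 : ℝ) • ((1 : Matrix (Fin 2) (Fin 2) ℂ) +
        pv (-((Real.sqrt (∑ i, b i ^ 2))⁻¹ • b)))) * Mᴴ) ∧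
    ptB (M * ((1 / 2 : ℝ) • ((1 : Matrix (Fin 2) (Fin 2) ℂ) +
        pv ((Real.sqrt (∑ i, b i ^ 2))⁻¹ • b))) * Mᴴ) =
      ptB (M * ((1 / 2 : ℝ) • ((1 : Matrix (Fin 2) (Fin 2) ℂ) +
        pv (-((Real.sqrt (∑ i, b i ^ 2))⁻¹ • b)))) * Mᴴ) := by
  set β : ℝ := Real.sqrt (∑ i, b i ^ 2) with hβdef
  have hsum : 0 < ∑ i, b i ^ 2 := by
    obtain ⟨i, hi⟩ := Function.ne_iff.mp hb
    exact Finset.sum_pos' (fun j _ => sq_nonneg _)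
      ⟨i, Finset.mem_univ i, lt_of_le_of_ne (sq_nonneg _) (Ne.symm (pow_ne_zero 2 hi))⟩
  have hβ : 0 < β := Real.sqrt_pos.mpr hsum
  set u : Fin 3 → ℝ := β⁻¹ • b with hudef
  have hbu : b = β • u := by
    rw [hudef, smul_smul, mul_inv_cancel₀ hβ.ne', one_smul]
  -- the maximally mixed state
  set ρ₀ : Matrix (Fin 2) (Fin 2) ℂ := (1 / 2 : ℝ) • (1 + pv 0) with hρ₀
  have hρ₀eq : ρ₀ = (1/2:ℝ) • (1 : Matrix (Fin 2) (Fin 2) ℂ) := by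
    rw [hρ₀, pv_zero, add_zero]
  have hdiag : ρ₀ = Matrix.diagonal (fun _ => (1/2:ℂ)) := by
    rw [hρ₀eq]; ext i j
    by_cases h : i = j <;> simp [h, Matrix.one_apply, Matrix.diagonal, Complex.real_smul]
  have hpsd : ρ₀.PosSemidef := by
    rw [hdiag, Matrix.posSemidef_diagonal_iff]
    intro i
    rw [show (1/2:ℂ) = ((1/2:ℝ):ℂ) by norm_num]
    exact_mod_cast by norm_num
  have htr : ρ₀.trace = 1 := by
    rw [hρ₀eq, Matrix.trace_smul, Matrix.trace_one]
    norm_num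
  obtain ⟨hA, hB⟩ := hmask ρ₀ hpsd htr
  have hE0 : E ρ₀ = (1/2:ℝ) • (1 + pv b) := by
    rw [hρ₀, hBloch 0, Matrix.mulVec_zero, zero_add]
  -- the difference identity
  have hdiff : E ρ₀ - ρ₀ = (β/2 : ℝ) • pv u := by
    rw [hE0, hρ₀eq, smul_add, add_sub_cancel_left, hbu, pv_smul, smul_smul]
    congr 1; ring
  -- the difference of the two pure states
  have hPP : ((1/2:ℝ) • ((1 : Matrix (Fin 2) (Fin 2) ℂ) + pv u))
      - ((1/2:ℝ) • ((1 : Matrix (Fin 2) (Fin 2) ℂ) + pv (-u))) = (1/2:ℝ) • ((2:ℝ) • pv u) := by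
    rw [pv_neg]
    module
  have hPP' : ((1/2:ℝ) • ((1 : Matrix (Fin 2) (Fin 2) ℂ) + pv u))
      - ((1/2:ℝ) • ((1 : Matrix (Fin 2) (Fin 2) ℂ) + pv (-u))) = pv u := by
    rw [hPP, smul_smul]; norm_num
  have hc : (β/2 : ℝ) ≠ 0 := by positivity
  constructor
  · have h0 : ptA (M * pv u * Mᴴ) = 0 := by
      have := hA
      have hsub : ptA (M * E ρ₀ * Mᴴ) - ptA (M * ρ₀ * Mᴴ) = (β/2:ℝ) • ptA (M * pv u * Mᴴ) := by
        rw [← ptA_sub, ← Matrix.sub_mul, ← Matrix.mul_sub, hdiff, Matrix.mul_smul,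
          Matrix.smul_mul, ptA_smul]
      rw [← this, sub_self] at hsub
      exact (smul_eq_zero.mp hsub.symm).resolve_left hc
    have : ptA (M * ((1/2:ℝ) • (1 + pv u)) * Mᴴ) - ptA (M * ((1/2:ℝ) • (1 + pv (-u))) * Mᴴ) = 0 := by
      rw [← ptA_sub, ← Matrix.sub_mul, ← Matrix.mul_sub, hPP', h0]
    exact sub_eq_zero.mp this
  · have h0 : ptB (M * pv u * Mᴴ) = 0 := by
      have hsub : ptB (M * E ρ₀ * Mᴴ) - ptB (M * ρ₀ * Mᴴ) = (β/2:ℝ) • ptB (M * pv u * Mᴴ) := by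
        rw [← ptB_sub, ← Matrix.sub_mul, ← Matrix.mul_sub, hdiff, Matrix.mul_smul,
          Matrix.smul_mul, ptB_smul]
      rw [← hB, sub_self] at hsub
      exact (smul_eq_zero.mp hsub.symm).resolve_left hc
    have : ptB (M * ((1/2:ℝ) • (1 + pv u)) * Mᴴ) - ptB (M * ((1/2:ℝ) • (1 + pv (-u))) * Mᴴ) = 0 := by
      rw [← ptB_sub, ← Matrix.sub_mul, ← Matrix.mul_sub, hPP', h0]
    exact sub_eq_zero.mp this
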